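/- Let U ⊆ ℂ^{n×n} and V ⊆ ℂ^{k×k} be linear subspaces, and let U ⊛ V ⊆ ℂ^{nk×nk} be the linear span of Kronecker products A ⊗ B with A ∈ U, B ∈ V. Let μ_U, μ_V, μ_{U⊛V} be the structure tensors of the matrix-vector products β_U : U × ℂ^n → ℂ^n, β_V : V × ℂ^k → ℂ^k, and β_{U⊛V} : (U ⊛ V) × ℂ^{nk} → ℂ^{nk} respectively. Suppose rank(μ_U) = dim U, rank(μ_V) = dim V, and the induced linear maps U ⊗ ℂ^n → ℂ^n and V ⊗ ℂ^k → ℂ^k are surjective. Then rank(μ_{U⊛V}) = rank(μ_U) · rank(μ_V). -/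

import Mathlib

/-! For a subspace `W` of square matrices, a decomposition of `μ_W` with `r` terms is the same as
an expansion `M = ∑ i, f i M • vecMulVec (w i) (γ i)` of every `M ∈ W` into fixed rank-one
matrices with linear coefficients. Taking Kronecker products of such expansions for `U` and `V`
expands every generator `A ⊗ₖ B` of `U ⊛ V`, and the expansion extends to the span once the
coefficients are functionals on the whole matrix space; hence
`rank μ_{U⊛V} ≤ rank μ_U · rank μ_V`. Conversely `rank μ_W ≥ dim W`, because `M ↦ (f i M)_i` is
injective, and `dim (U ⊛ V) ≥ dim U · dim V`, because Kronecker products of basis matrices are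
separated by the Kronecker products of the dual functionals. Under `rank μ_U = dim U` and
`rank μ_V = dim V` the two bounds meet. -/

open Filter Topology

/-- `HasTensorRankLE 𝕜 β r` means that the bilinear operation `β` admits a decomposition
into `r` rank-one terms, i.e., the structure tensor `μ_β ∈ U* ⊗ V* ⊗ W` of `β` can be
written as `∑ i, f i ⊗ g i ⊗ w i` with `r` summands; equivalently `rank (μ_β) ≤ r`. -/
def HasTensorRankLE (𝕜 : Type*) [Field 𝕜] {U V W : Type*}
    [AddCommGroup U] [Module 𝕜 U] [AddCommGroup V] [Module 𝕜 V]
    [AddCommGroup W] [Module 𝕜 W] (β : U → V → W) (r : ℕ) : Prop :=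
  ∃ (f : Fin r → (U →ₗ[𝕜] 𝕜)) (g : Fin r → (V →ₗ[𝕜] 𝕜)) (w : Fin r → W),
    ∀ u v, β u v = ∑ i, (f i u * g i v) • w i

/-- The rank of the structure tensor `μ_β` of a bilinear operation `β`. -/
noncomputable def tensorRank (𝕜 : Type*) [Field 𝕜] {U V W : Type*}
    [AddCommGroup U] [Module 𝕜 U] [AddCommGroup V] [Module 𝕜 V]
    [AddCommGroup W] [Module 𝕜 W] (β : U → V → W) : ℕ :=
  sInf {r | HasTensorRankLE 𝕜 β r}

/-- The border rank of the structure tensor `μ_β` of a bilinear operation `β` : the least `r`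
such that `μ_β` is a limit of a sequence of tensors of rank at most `r` (convergence of the
tensors in the finite-dimensional space `U* ⊗ V* ⊗ W` being equivalent to pointwise
convergence of the corresponding bilinear maps). -/
noncomputable def borderRank (𝕜 : Type*) [Field 𝕜] {U V W : Type*}
    [AddCommGroup U] [Module 𝕜 U] [AddCommGroup V] [Module 𝕜 V]
    [AddCommGroup W] [Module 𝕜 W] [TopologicalSpace W] (β : U → V → W) : ℕ :=
  sInf {r | ∃ s : ℕ → (U → V → W), (∀ m, HasTensorRankLE 𝕜 (s m) r) ∧
    ∀ u v, Tendsto (fun m => s m u v) atTop (𝓝 (β u v))}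

/-- Matrix-vector product by matrices in a subspace `U ⊆ ℂ^{n×n}`, as a bilinear map. -/
noncomputable def mulVecBil {d : Type*} [Fintype d] [DecidableEq d]
    (U : Submodule ℂ (Matrix d d ℂ)) :
    U →ₗ[ℂ] (d → ℂ) →ₗ[ℂ] (d → ℂ) :=
  LinearMap.mk₂ ℂ (fun A x => (A : Matrix d d ℂ).mulVec x)
    (fun A B x => by simp [Matrix.add_mulVec])
    (fun c A x => by simp [Matrix.smul_mulVec])
    (fun A x y => by simp [Matrix.mulVec_add])
    (fun A c x => by simp [Matrix.mulVec_smul])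

/-- `U ⊛ V`, the span of the Kronecker products `A ⊗ B` of matrices `A ∈ U`, `B ∈ V`. -/
noncomputable def kronSpace {n k : ℕ} (U : Submodule ℂ (Matrix (Fin n) (Fin n) ℂ))
    (V : Submodule ℂ (Matrix (Fin k) (Fin k) ℂ)) :
    Submodule ℂ (Matrix (Fin n × Fin k) (Fin n × Fin k) ℂ) :=
  Submodule.span ℂ {M | ∃ A ∈ U, ∃ B ∈ V, M = Matrix.kroneckerMap (· * ·) A B}

open Matrix
open scoped Kronecker

section TensorRank

variable {𝕜 : Type*} [Field 𝕜] {U V W : Type*} [AddCommGroup U] [Module 𝕜 U]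
  [AddCommGroup V] [Module 𝕜 V] [AddCommGroup W] [Module 𝕜 W] {β : U → V → W}

theorem hasTensorRankLE_of_eq_sum {ι : Type*} [Fintype ι] (f : ι → U →ₗ[𝕜] 𝕜)
    (g : ι → V →ₗ[𝕜] 𝕜) (w : ι → W) (h : ∀ u v, β u v = ∑ i, (f i u * g i v) • w i) :
    HasTensorRankLE 𝕜 β (Fintype.card ι) := by
  let e := (Fintype.equivFin ι).symm
  exact ⟨f ∘ e, g ∘ e, w ∘ e, fun u v => (h u v).trans (e.sum_comp _).symm⟩

theorem tensorRank_le {r : ℕ} (h : HasTensorRankLE 𝕜 β r) : tensorRank 𝕜 β ≤ r :=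
  Nat.sInf_le h

theorem hasTensorRankLE_tensorRank {r : ℕ} (h : HasTensorRankLE 𝕜 β r) :
    HasTensorRankLE 𝕜 β (tensorRank 𝕜 β) :=
  Nat.sInf_mem (s := {r | HasTensorRankLE 𝕜 β r}) ⟨r, h⟩

theorem HasTensorRankLE.finrank_le {r : ℕ} (h : HasTensorRankLE 𝕜 β r)
    (hβ : ∀ u, (∀ v, β u v = 0) → u = 0) : Module.finrank 𝕜 U ≤ r := by
  obtain ⟨f, g, w, hfgw⟩ := h
  have hinj : Function.Injective (LinearMap.pi f) := by
    refine (injective_iff_map_eq_zero _).2 fun u hu => hβ u fun v => ?_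
    have hfu : ∀ i, f i u = 0 := fun i => congrFun hu i
    simp [hfgw, hfu]
  simpa using LinearMap.finrank_le_finrank_of_injective hinj

end TensorRank

section MulVec

variable {𝕜 : Type*} [Field 𝕜] {d : Type*} [Fintype d] [DecidableEq d]
  {W : Submodule 𝕜 (Matrix d d 𝕜)}

theorem hasTensorRankLE_mulVec_of_eq_sum_vecMulVec {ι : Type*} [Fintype ι]
    (F : ι → Matrix d d 𝕜 →ₗ[𝕜] 𝕜) (w γ : ι → d → 𝕜)
    (h : ∀ M ∈ W, M = ∑ i, F i M • vecMulVec (w i) (γ i)) :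
    HasTensorRankLE 𝕜 (fun (M : W) (z : d → 𝕜) => (M : Matrix d d 𝕜) *ᵥ z)
      (Fintype.card ι) := by
  refine hasTensorRankLE_of_eq_sum (fun i => F i ∘ₗ W.subtype)
    (fun i => dotProductEquiv 𝕜 d (γ i)) w fun M z => ?_
  calc (M : Matrix d d 𝕜) *ᵥ z = (∑ i, F i M • vecMulVec (w i) (γ i)) *ᵥ z := by
        rw [← h M M.2]
    _ = _ := by simp [sum_mulVec, smul_mulVec, vecMulVec_mulVec, smul_smul]

theorem HasTensorRankLE.exists_eq_sum_vecMulVec {r : ℕ}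
    (h : HasTensorRankLE 𝕜 (fun (M : W) (z : d → 𝕜) => (M : Matrix d d 𝕜) *ᵥ z) r) :
    ∃ (F : Fin r → Matrix d d 𝕜 →ₗ[𝕜] 𝕜) (w γ : Fin r → d → 𝕜),
      ∀ M ∈ W, M = ∑ i, F i M • vecMulVec (w i) (γ i) := by
  obtain ⟨f, g, w, hfgw⟩ := h
  choose F hF using fun i => (f i).exists_extend
  refine ⟨F, w, fun i c => g i (Pi.single c 1), fun M hM => ?_⟩
  ext a c
  have hcol := congrFun (hfgw ⟨M, hM⟩ (Pi.single c 1)) a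
  simp only [mulVec_single_one, col_apply] at hcol
  simp [hcol, ← hF, vecMulVec_apply, Matrix.sum_apply, mul_comm, mul_left_comm]

variable (W) in
theorem hasTensorRankLE_mulVec_card :
    HasTensorRankLE 𝕜 (fun (M : W) (z : d → 𝕜) => (M : Matrix d d 𝕜) *ᵥ z)
      (Fintype.card (d × d)) := by
  refine hasTensorRankLE_mulVec_of_eq_sum_vecMulVec (fun p => entryLinearMap 𝕜 𝕜 p.1 p.2)
    (fun p => Pi.single p.1 1) (fun p => Pi.single p.2 1) fun M _ => ?_
  ext a c
  simp [Matrix.sum_apply, vecMulVec_apply, Pi.single_apply, Fintype.sum_prod_type]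

variable (W) in
theorem finrank_le_tensorRank_mulVec :
    Module.finrank 𝕜 W ≤
      tensorRank 𝕜 (fun (M : W) (z : d → 𝕜) => (M : Matrix d d 𝕜) *ᵥ z) :=
  (hasTensorRankLE_tensorRank (hasTensorRankLE_mulVec_card W)).finrank_le fun M hM =>
    Subtype.ext <| ext_iff_mulVec.2 fun z => by simp [hM]

end MulVec

section Kronecker

variable {R : Type*} [CommSemiring R] {l m n p : Type*}

noncomputable def kroneckerDual (F : Matrix l m R →ₗ[R] R) (G : Matrix n p R →ₗ[R] R) :
    Matrix (l × n) (m × p) R →ₗ[R] R :=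
  F ∘ₗ G.mapMatrix ∘ₗ (compLinearEquiv l m n p R R).symm.toLinearMap

theorem kroneckerDual_kronecker (F : Matrix l m R →ₗ[R] R) (G : Matrix n p R →ₗ[R] R)
    (A : Matrix l m R) (B : Matrix n p R) : kroneckerDual F G (A ⊗ₖ B) = F A * G B := by
  have hblocks : G.mapMatrix ((compLinearEquiv l m n p R R).symm (A ⊗ₖ B)) = G B • A := by
    ext i j
    have hblock : (comp l m n p R).symm (A ⊗ₖ B) i j = A i j • B := by ext; rfl
    simp [hblock, mul_comm]
  simp only [kroneckerDual, LinearMap.comp_apply, LinearEquiv.coe_coe, hblocks, map_smul,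
    smul_eq_mul, mul_comm]

theorem kronecker_eq_sum_vecMulVec {ι κ : Type*} [Fintype ι] [Fintype κ]
    {A : Matrix l m R} {B : Matrix n p R} {a : ι → R} {b : κ → R}
    {w : ι → l → R} {γ : ι → m → R} {w' : κ → n → R} {γ' : κ → p → R}
    (hA : A = ∑ i, a i • vecMulVec (w i) (γ i)) (hB : B = ∑ j, b j • vecMulVec (w' j) (γ' j)) :
    A ⊗ₖ B = ∑ q : ι × κ, (a q.1 * b q.2) •
      vecMulVec (fun x => w q.1 x.1 * w' q.2 x.2) (fun y => γ q.1 y.1 * γ' q.2 y.2) := by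
  ext ⟨a, b⟩ ⟨c, e⟩
  simp only [hA, hB, kronecker_apply, Matrix.sum_apply, Matrix.smul_apply, vecMulVec_apply,
    smul_eq_mul, Finset.sum_mul_sum, Fintype.sum_prod_type]
  refine Finset.sum_congr rfl fun i _ => Finset.sum_congr rfl fun j _ => ?_
  ring

end Kronecker

section KronSpace

variable {n k : ℕ} {U : Submodule ℂ (Matrix (Fin n) (Fin n) ℂ)}
  {V : Submodule ℂ (Matrix (Fin k) (Fin k) ℂ)}

theorem eq_sum_vecMulVec_of_mem_kronSpace {ι κ : Type*} [Fintype ι] [Fintype κ]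
    {F : ι → Matrix (Fin n) (Fin n) ℂ →ₗ[ℂ] ℂ} {w γ : ι → Fin n → ℂ}
    {G : κ → Matrix (Fin k) (Fin k) ℂ →ₗ[ℂ] ℂ} {w' γ' : κ → Fin k → ℂ}
    (hU : ∀ A ∈ U, A = ∑ i, F i A • vecMulVec (w i) (γ i))
    (hV : ∀ B ∈ V, B = ∑ j, G j B • vecMulVec (w' j) (γ' j))
    {M : Matrix (Fin n × Fin k) (Fin n × Fin k) ℂ} (hM : M ∈ kronSpace U V) :
    M = ∑ q : ι × κ, kroneckerDual (F q.1) (G q.2) M •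
      vecMulVec (fun x => w q.1 x.1 * w' q.2 x.2) (fun y => γ q.1 y.1 * γ' q.2 y.2) := by
  let expansion : Matrix (Fin n × Fin k) (Fin n × Fin k) ℂ →ₗ[ℂ]
      Matrix (Fin n × Fin k) (Fin n × Fin k) ℂ :=
    ∑ q : ι × κ, (kroneckerDual (F q.1) (G q.2)).smulRight
      (vecMulVec (fun x => w q.1 x.1 * w' q.2 x.2) (fun y => γ q.1 y.1 * γ' q.2 y.2))
  have hgen : Set.EqOn (LinearMap.id (R := ℂ)) expansion
      {M | ∃ A ∈ U, ∃ B ∈ V, M = A ⊗ₖ B} := by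
    rintro _ ⟨A, hA, B, hB, rfl⟩
    simpa [expansion, kroneckerDual_kronecker] using
      kronecker_eq_sum_vecMulVec (hU A hA) (hV B hB)
  simpa [expansion] using LinearMap.eqOn_span' hgen hM

theorem HasTensorRankLE.mulVec_kronSpace {r s : ℕ}
    (hU : HasTensorRankLE ℂ (fun (A : U) (x : Fin n → ℂ) =>
      (A : Matrix (Fin n) (Fin n) ℂ) *ᵥ x) r)
    (hV : HasTensorRankLE ℂ (fun (B : V) (y : Fin k → ℂ) =>
      (B : Matrix (Fin k) (Fin k) ℂ) *ᵥ y) s) :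
    HasTensorRankLE ℂ (fun (M : kronSpace U V) (z : Fin n × Fin k → ℂ) =>
      (M : Matrix (Fin n × Fin k) (Fin n × Fin k) ℂ) *ᵥ z) (r * s) := by
  obtain ⟨F, w, γ, hF⟩ := hU.exists_eq_sum_vecMulVec
  obtain ⟨G, w', γ', hG⟩ := hV.exists_eq_sum_vecMulVec
  simpa using hasTensorRankLE_mulVec_of_eq_sum_vecMulVec _ _ _ fun M hM =>
    eq_sum_vecMulVec_of_mem_kronSpace hF hG hM

variable (U V) in
theorem finrank_mul_finrank_le_finrank_kronSpace :
    Module.finrank ℂ U * Module.finrank ℂ V ≤ Module.finrank ℂ (kronSpace U V) := by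
  let bU := Module.finBasis ℂ U
  let bV := Module.finBasis ℂ V
  choose F hF using fun i => (bU.coord i).exists_extend
  choose G hG using fun j => (bV.coord j).exists_extend
  let K : Fin _ × Fin _ → Matrix (Fin n × Fin k) (Fin n × Fin k) ℂ :=
    fun q => (bU q.1 : Matrix _ _ ℂ) ⊗ₖ (bV q.2 : Matrix _ _ ℂ)
  let Φ := LinearMap.pi fun q : Fin _ × Fin _ => kroneckerDual (F q.1) (G q.2)
  have hK : LinearIndependent ℂ K := by
    have hdual : Φ ∘ K = fun q => Pi.single q 1 := by
      ext q q'
      have hFU : F q'.1 (bU q.1) = bU.coord q'.1 (bU q.1) := LinearMap.congr_fun (hF q'.1) _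
      have hGV : G q'.2 (bV q.2) = bV.coord q'.2 (bV q.2) := LinearMap.congr_fun (hG q'.2) _
      simp only [Φ, K, Function.comp_apply, LinearMap.pi_apply, kroneckerDual_kronecker, hFU, hGV,
        Module.Basis.coord_apply, Module.Basis.repr_self, Finsupp.single_apply, mul_ite, mul_one,
        mul_zero, Pi.single_apply, eq_comm, Prod.ext_iff]
      split_ifs <;> simp_all
    refine LinearIndependent.of_comp Φ ?_
    rw [hdual]
    exact Pi.linearIndependent_single_one _ ℂ
  have hKV : Submodule.span ℂ (Set.range K) ≤ kronSpace U V :=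
    Submodule.span_le.2 <| Set.range_subset_iff.2 fun q =>
      Submodule.subset_span ⟨_, (bU q.1).2, _, (bV q.2).2, rfl⟩
  calc Module.finrank ℂ U * Module.finrank ℂ V
      = Module.finrank ℂ (Submodule.span ℂ (Set.range K)) := by simp [finrank_span_eq_card hK]
    _ ≤ Module.finrank ℂ (kronSpace U V) := Submodule.finrank_mono hKV

end KronSpace

theorem tensorRank_kronSpace_mulVec_general (n k : ℕ)
    (U : Submodule ℂ (Matrix (Fin n) (Fin n) ℂ))
    (V : Submodule ℂ (Matrix (Fin k) (Fin k) ℂ))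
    (hU : tensorRank ℂ (fun (A : U) (x : Fin n → ℂ) =>
        (A : Matrix (Fin n) (Fin n) ℂ).mulVec x) = Module.finrank ℂ U)
    (hV : tensorRank ℂ (fun (B : V) (y : Fin k → ℂ) =>
        (B : Matrix (Fin k) (Fin k) ℂ).mulVec y) = Module.finrank ℂ V) :
    tensorRank ℂ (fun (M : kronSpace U V) (z : Fin n × Fin k → ℂ) =>
        (M : Matrix (Fin n × Fin k) (Fin n × Fin k) ℂ).mulVec z) =
      tensorRank ℂ (fun (A : U) (x : Fin n → ℂ) =>
        (A : Matrix (Fin n) (Fin n) ℂ).mulVec x) *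
      tensorRank ℂ (fun (B : V) (y : Fin k → ℂ) =>
        (B : Matrix (Fin k) (Fin k) ℂ).mulVec y) := by
  refine le_antisymm (tensorRank_le ?_) ?_
  · exact (hasTensorRankLE_tensorRank (hasTensorRankLE_mulVec_card U)).mulVec_kronSpace
      (hasTensorRankLE_tensorRank (hasTensorRankLE_mulVec_card V))
  · rw [hU, hV]
    exact (finrank_mul_finrank_le_finrank_kronSpace U V).trans
      (finrank_le_tensorRank_mulVec (kronSpace U V))

/-- If `U ⊆ ℂ^{n×n}` and `V ⊆ ℂ^{k×k}` are linear subspaces whose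
matrix-vector product structure tensors `μ_U`, `μ_V` satisfy `rank (μ_U) = dim U`,
`rank (μ_V) = dim V`, and whose induced linear maps `U ⊗ ℂ^n → ℂ^n` and `V ⊗ ℂ^k → ℂ^k` are
surjective, then the structure tensor of the matrix-vector product for `U ⊛ V` satisfies
`rank (μ_{U ⊛ V}) = rank (μ_U) · rank (μ_V)`. -/
theorem tensorRank_kronSpace_mulVec (n k : ℕ)
    (U : Submodule ℂ (Matrix (Fin n) (Fin n) ℂ))
    (V : Submodule ℂ (Matrix (Fin k) (Fin k) ℂ))
    (hU : tensorRank ℂ (fun (A : U) (x : Fin n → ℂ) =>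
        (A : Matrix (Fin n) (Fin n) ℂ).mulVec x) = Module.finrank ℂ U)
    (hV : tensorRank ℂ (fun (B : V) (y : Fin k → ℂ) =>
        (B : Matrix (Fin k) (Fin k) ℂ).mulVec y) = Module.finrank ℂ V)
    (hUsurj : Function.Surjective (TensorProduct.lift (mulVecBil U)))
    (hVsurj : Function.Surjective (TensorProduct.lift (mulVecBil V))) :
    tensorRank ℂ (fun (M : kronSpace U V) (z : Fin n × Fin k → ℂ) =>
        (M : Matrix (Fin n × Fin k) (Fin n × Fin k) ℂ).mulVec z) =
      tensorRank ℂ (fun (A : U) (x : Fin n → ℂ) =>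
        (A : Matrix (Fin n) (Fin n) ℂ).mulVec x) *
      tensorRank ℂ (fun (B : V) (y : Fin k → ℂ) =>
        (B : Matrix (Fin k) (Fin k) ℂ).mulVec y) :=
  tensorRank_kronSpace_mulVec_general n k U V hU hV
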